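/- arXiv:0802.0118 — 2 statements merged into one kernel-verified Lean document; each statement's English description precedes it below -/
import Mathlib

section
/- If G₁ and G₂ are quasipotent groups with a common cyclic subgroup A, then G₁ and G₂ are both topologically embedded in the amalgamated free product G₁ ∗_A G₂. -/
/-- `H` is topologically embedded in `G` via the (injective) homomorphism `f`:
for every finite-index subgroup `K` of `H` there is a finite-index subgroup `L` of `G`
whose preimage under `f` is contained in `K`. -/
def TopologicallyEmbeddedVia {H G : Type*} [Group H] [Group G] (f : H →* G) : Prop :=
  ∀ K : Subgroup H, K.FiniteIndex → ∃ L : Subgroup G, L.FiniteIndex ∧ L.comap f ≤ K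

/-- The amalgamated free product `G₁ ∗_H G₂` of `G₁` and `G₂` over a common subgroup `H`
(given by homomorphisms `f₁ : H →* G₁`, `f₂ : H →* G₂`): the quotient of the free
product `G₁ ∗ G₂` by the normal closure of the elements `f₁(h) · f₂(h)⁻¹`. -/
abbrev AmalgamatedProduct {H G₁ G₂ : Type*} [Group H] [Group G₁] [Group G₂]
    (f₁ : H →* G₁) (f₂ : H →* G₂) : Type _ :=
  (Monoid.Coprod G₁ G₂) ⧸ Subgroup.normalClosure
    (Set.range fun h : H => Monoid.Coprod.inl (f₁ h) * (Monoid.Coprod.inr (f₂ h))⁻¹)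

/-- The canonical homomorphism `G₁ →* G₁ ∗_H G₂`. -/
def AmalgamatedProduct.inl {H G₁ G₂ : Type*} [Group H] [Group G₁] [Group G₂]
    (f₁ : H →* G₁) (f₂ : H →* G₂) : G₁ →* AmalgamatedProduct f₁ f₂ :=
  (QuotientGroup.mk' _).comp Monoid.Coprod.inl

/-- The canonical homomorphism `G₂ →* G₁ ∗_H G₂`. -/
def AmalgamatedProduct.inr {H G₁ G₂ : Type*} [Group H] [Group G₁] [Group G₂]
    (f₁ : H →* G₁) (f₂ : H →* G₂) : G₂ →* AmalgamatedProduct f₁ f₂ :=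
  (QuotientGroup.mk' _).comp Monoid.Coprod.inr

/-- A group `G` is quasipotent if for each `g ∈ G` there are `k ≥ 1` and a sequence
`(N n)` of finite-index normal subgroups with `⟨g⟩ ∩ N n = ⟨g^(n·k)⟩` for every `n ≥ 1`. -/
def Quasipotent (G : Type*) [Group G] : Prop :=
  ∀ g : G, ∃ k : ℕ, 0 < k ∧ ∃ N : ℕ → Subgroup G,
    ∀ n : ℕ, 0 < n → (N n).Normal ∧ (N n).FiniteIndex ∧
      Subgroup.zpowers g ⊓ N n = Subgroup.zpowers (g ^ (n * k))

/-!
Let `a` generate `A` and put `g = f₁ a`, `h = f₂ a`; they have the same order. Given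
finite-index subgroups `K₁ ≤ G₁`, `K₂ ≤ G₂`, quasipotency yields finite-index normal subgroups
`N₁ ≤ K₁`, `N₂ ≤ K₂` and a common exponent `m` such that the images of `g` and `h` in
`G₁ ⧸ N₁` and `G₂ ⧸ N₂` both have order `gcd (orderOf g) m`. Two finite groups `P₁`, `P₂` with a
common subgroup `Z` embed compatibly into one symmetric group: writing `Pᵢ ≅ Pᵢ/Z × Z` as sets,
right multiplication makes each `Pᵢ` act faithfully on `(P₁/Z × P₂/Z) × Z`, and `Z` acts in
both cases by right multiplication on the last factor. The induced map from `G₁ ∗_A G₂` to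
this finite symmetric group then has a finite-index kernel meeting `Gᵢ` inside `Nᵢ ≤ Kᵢ`.
-/

open Function Subgroup

universe u v w

section Quotients

variable {G : Type*} [Group G]

theorem pow_mem_zpowers_pow_iff {g : G} {m t : ℕ} :
    g ^ t ∈ zpowers (g ^ m) ↔ (orderOf g).gcd m ∣ t := by
  simp_rw [← Int.gcd_natCast_natCast, Int.gcd_dvd_iff, mem_zpowers_iff, ← zpow_natCast,
    ← zpow_mul, zpow_eq_zpow_iff_modEq, Int.modEq_iff_dvd, dvd_def, sub_eq_iff_eq_add]
  exact exists_comm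

theorem orderOf_mk_eq_gcd {N : Subgroup G} [N.Normal] {g : G} {m : ℕ}
    (h : zpowers g ⊓ N = zpowers (g ^ m)) : orderOf (g : G ⧸ N) = (orderOf g).gcd m := by
  have key (t : ℕ) : (g : G ⧸ N) ^ t = 1 ↔ (orderOf g).gcd m ∣ t := by
    rw [← QuotientGroup.mk_pow, QuotientGroup.eq_one_iff, ← pow_mem_zpowers_pow_iff, ← h,
      mem_inf, and_iff_right (pow_mem (mem_zpowers g) t)]
  exact Nat.dvd_antisymm (orderOf_dvd_of_pow_eq_one ((key _).2 dvd_rfl))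
    ((key _).1 (pow_orderOf_eq_one _))

theorem zpowers_inf_inf_eq {N K : Subgroup G} [K.Normal] {g : G} {m : ℕ}
    (h : zpowers g ⊓ N = zpowers (g ^ m)) (hm : K.index ∣ m) :
    zpowers g ⊓ (K ⊓ N) = zpowers (g ^ m) := by
  obtain ⟨c, rfl⟩ := hm
  rw [inf_left_comm, h, inf_eq_right, zpowers_le, pow_mul]
  exact pow_mem (K.pow_index_mem g) c

theorem Quasipotent.exists_normal_le_orderOf_mk (hG : Quasipotent G) (g : G) :
    ∃ k > 0, ∀ (K : Subgroup G) [K.Normal] (n : ℕ), 0 < n → K.index ∣ n →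
      ∃ (N : Subgroup G) (_ : N.Normal), N.FiniteIndex ∧ N ≤ K ∧
        orderOf (g : G ⧸ N) = (orderOf g).gcd (n * k) := by
  obtain ⟨k, hk, N, hN⟩ := hG g
  refine ⟨k, hk, fun K _ n hn hKn => ?_⟩
  obtain ⟨_, _, hgN⟩ := hN n hn
  have : K.FiniteIndex := ⟨(Nat.pos_of_dvd_of_pos hKn hn).ne'⟩
  exact ⟨K ⊓ N n, normal_inf_normal _ _, inferInstance, inf_le_left,
    orderOf_mk_eq_gcd (zpowers_inf_inf_eq hgN (hKn.mul_right k))⟩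

end Quotients

theorem exists_normal_le_orderOf_mk_eq {G₁ G₂ : Type*} [Group G₁] [Group G₂]
    (hq₁ : Quasipotent G₁) (hq₂ : Quasipotent G₂) {g : G₁} {h : G₂}
    (hgh : orderOf g = orderOf h) (K₁ : Subgroup G₁) (K₂ : Subgroup G₂)
    [K₁.FiniteIndex] [K₂.FiniteIndex] :
    ∃ (N₁ : Subgroup G₁) (_ : N₁.Normal) (N₂ : Subgroup G₂) (_ : N₂.Normal),
      N₁.FiniteIndex ∧ N₂.FiniteIndex ∧ N₁ ≤ K₁ ∧ N₂ ≤ K₂ ∧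
        orderOf (g : G₁ ⧸ N₁) = orderOf (h : G₂ ⧸ N₂) := by
  obtain ⟨k₁, hk₁, hN₁⟩ := hq₁.exists_normal_le_orderOf_mk g
  obtain ⟨k₂, hk₂, hN₂⟩ := hq₂.exists_normal_le_orderOf_mk h
  set e := K₁.normalCore.index * K₂.normalCore.index
  have he : 0 < e :=
    Nat.pos_of_ne_zero (mul_ne_zero FiniteIndex.index_ne_zero FiniteIndex.index_ne_zero)
  obtain ⟨N₁, _, hfin₁, hle₁, hord₁⟩ := hN₁ K₁.normalCore (e * k₂) (Nat.mul_pos he hk₂)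
    (dvd_mul_of_dvd_left (dvd_mul_right _ _) _)
  obtain ⟨N₂, _, hfin₂, hle₂, hord₂⟩ := hN₂ K₂.normalCore (e * k₁) (Nat.mul_pos he hk₁)
    (dvd_mul_of_dvd_left (dvd_mul_left _ _) _)
  refine ⟨N₁, ‹_›, N₂, ‹_›, hfin₁, hfin₂, hle₁.trans K₁.normalCore_le,
    hle₂.trans K₂.normalCore_le, ?_⟩
  rw [hord₁, hord₂, hgh, mul_right_comm]

theorem MonoidHom.ker_eq_ker_of_orderOf_eq {A P₁ P₂ : Type*} [Group A] [Group P₁] [Group P₂]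
    {a : A} (ha : ∀ x, x ∈ zpowers a) (ρ₁ : A →* P₁) (ρ₂ : A →* P₂)
    (h : orderOf (ρ₁ a) = orderOf (ρ₂ a)) : ρ₁.ker = ρ₂.ker := by
  ext x
  obtain ⟨n, rfl⟩ := mem_zpowers_iff.1 (ha x)
  simp only [MonoidHom.mem_ker, map_zpow, ← orderOf_dvd_iff_zpow_eq_one, h]

section Cosets

variable {Z P : Type*} [Group Z] [Group P]

theorem exists_quotient_prod_equiv_mul_right (ι : Z →* P) (hι : Injective ι) :
    ∃ E : (P ⧸ ι.range) × Z ≃ P, ∀ q w z, E (q, w * z) = E (q, w) * ι z := by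
  have hmk (q : P ⧸ ι.range) (w : Z) : ((q.out * ι w : P) : P ⧸ ι.range) = q := by
    rw [QuotientGroup.mk_mul_of_mem _ (ι.mem_range.2 ⟨w, rfl⟩), QuotientGroup.out_eq']
  have hbij : Bijective fun p : (P ⧸ ι.range) × Z => p.1.out * ι p.2 := by
    constructor
    · rintro ⟨q, w⟩ ⟨q', w'⟩ (h : q.out * ι w = q'.out * ι w')
      obtain rfl : q = q' := by rw [← hmk q w, ← hmk q' w', h]
      simpa using hι (mul_left_cancel h)
    · intro x
      obtain ⟨w, hw⟩ := QuotientGroup.eq.mp (QuotientGroup.out_eq' (x : P ⧸ ι.range))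
      exact ⟨(x, w), by simp [hw]⟩
  exact ⟨Equiv.ofBijective _ hbij, fun q w z => by simp [mul_assoc]⟩

end Cosets

section RightMul

variable (P : Type*) [Group P] (Y : Type*)

def rightMulPerm : P →* Equiv.Perm (P × Y) where
  toFun u := (Equiv.mulRight u⁻¹).prodCongr (Equiv.refl Y)
  map_one' := by ext <;> simp
  map_mul' u v := by ext <;> simp [Equiv.Perm.mul_apply, mul_assoc]

variable {P Y}

@[simp]
theorem rightMulPerm_apply (u : P) (p : P × Y) : rightMulPerm P Y u p = (p.1 * u⁻¹, p.2) := rfl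

theorem rightMulPerm_injective [Nonempty Y] : Injective (rightMulPerm P Y) := by
  refine (injective_iff_map_eq_one _).2 fun u hu => ?_
  obtain ⟨y⟩ := ‹Nonempty Y›
  simpa using congrArg Prod.fst (Equiv.ext_iff.1 hu (1, y))

end RightMul

theorem exists_injective_perm_apply_eq {Z P W Y : Type*} [Group Z] [Group P] [Nonempty Y]
    (ι : Z →* P) (hι : Injective ι) (e : W ≃ (P ⧸ ι.range) × Y) :
    ∃ ψ : P →* Equiv.Perm (W × Z), Injective ψ ∧ ∀ z x, ψ (ι z) x = (x.1, x.2 * z⁻¹) := by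
  obtain ⟨E, hE⟩ := exists_quotient_prod_equiv_mul_right ι hι
  let T : W × Z ≃ P × Y :=
    { toFun x := (E ((e x.1).1, x.2), (e x.1).2)
      invFun p := (e.symm ((E.symm p.1).1, p.2), (E.symm p.1).2)
      left_inv x := by simp
      right_inv p := by simp }
  refine ⟨T.symm.permCongrHom.toMonoidHom.comp (rightMulPerm P Y),
    T.symm.permCongrHom.injective.comp rightMulPerm_injective, fun z x => T.injective ?_⟩
  simp [T, Equiv.permCongr_apply, hE]

theorem exists_perm_injective_comp_eq {Z : Type u} {P₁ : Type v} {P₂ : Type w} [Group Z]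
    [Group P₁] [Group P₂] [Finite P₁] [Finite P₂] (ι₁ : Z →* P₁) (ι₂ : Z →* P₂)
    (h₁ : Injective ι₁) (h₂ : Injective ι₂) :
    ∃ (X : Type max u v w) (_ : Finite X) (ψ₁ : P₁ →* Equiv.Perm X) (ψ₂ : P₂ →* Equiv.Perm X),
      Injective ψ₁ ∧ Injective ψ₂ ∧ ψ₁.comp ι₁ = ψ₂.comp ι₂ := by
  have : Finite Z := Finite.of_injective ι₁ h₁
  obtain ⟨ψ₁, hψ₁, hι₁⟩ := exists_injective_perm_apply_eq ι₁ h₁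
    (Equiv.refl ((P₁ ⧸ ι₁.range) × (P₂ ⧸ ι₂.range)))
  obtain ⟨ψ₂, hψ₂, hι₂⟩ := exists_injective_perm_apply_eq ι₂ h₂
    (Equiv.prodComm (P₁ ⧸ ι₁.range) (P₂ ⧸ ι₂.range))
  refine ⟨_, inferInstance, ψ₁, ψ₂, hψ₁, hψ₂, ?_⟩
  ext z x : 2
  simp [hι₁, hι₂]

theorem exists_perm_injective_comp_eq_of_ker_eq {Z : Type u} {P₁ : Type v} {P₂ : Type w}
    [Group Z] [Group P₁] [Group P₂] [Finite P₁] [Finite P₂] (ρ₁ : Z →* P₁) (ρ₂ : Z →* P₂)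
    (h : ρ₁.ker = ρ₂.ker) :
    ∃ (X : Type max u v w) (_ : Finite X) (ψ₁ : P₁ →* Equiv.Perm X) (ψ₂ : P₂ →* Equiv.Perm X),
      Injective ψ₁ ∧ Injective ψ₂ ∧ ψ₁.comp ρ₁ = ψ₂.comp ρ₂ := by
  obtain ⟨X, _, ψ₁, ψ₂, hψ₁, hψ₂, hψ⟩ := exists_perm_injective_comp_eq
    (QuotientGroup.kerLift ρ₁)
    ((QuotientGroup.kerLift ρ₂).comp (QuotientGroup.quotientMulEquivOfEq h).toMonoidHom)
    (QuotientGroup.kerLift_injective ρ₁)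
    ((QuotientGroup.kerLift_injective ρ₂).comp (MulEquiv.injective _))
  refine ⟨X, ‹_›, ψ₁, ψ₂, hψ₁, hψ₂, MonoidHom.ext fun z => ?_⟩
  exact DFunLike.congr_fun hψ (z : Z ⧸ ρ₁.ker)

namespace AmalgamatedProduct

variable {H G₁ G₂ F : Type*} [Group H] [Group G₁] [Group G₂] [Group F]
  {f₁ : H →* G₁} {f₂ : H →* G₂}

def lift (ψ₁ : G₁ →* F) (ψ₂ : G₂ →* F) (h : ψ₁.comp f₁ = ψ₂.comp f₂) :
    AmalgamatedProduct f₁ f₂ →* F :=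
  QuotientGroup.lift _ (Monoid.Coprod.lift ψ₁ ψ₂) <| normalClosure_le_normal <| by
    rintro _ ⟨a, rfl⟩
    simpa [mul_inv_eq_one] using DFunLike.congr_fun h a

theorem lift_comp_inl {ψ₁ : G₁ →* F} {ψ₂ : G₂ →* F} (h : ψ₁.comp f₁ = ψ₂.comp f₂) :
    (lift ψ₁ ψ₂ h).comp (inl f₁ f₂) = ψ₁ := by
  ext; simp [lift, inl]

theorem lift_comp_inr {ψ₁ : G₁ →* F} {ψ₂ : G₂ →* F} (h : ψ₁.comp f₁ = ψ₂.comp f₂) :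
    (lift ψ₁ ψ₂ h).comp (inr f₁ f₂) = ψ₂ := by
  ext; simp [lift, inr]

end AmalgamatedProduct

theorem exists_finiteIndex_comap_le_of_ker_le {H G F : Type*} [Group H] [Group G] [Group F]
    [Finite F] (f : H →* G) (φ : G →* F) {K : Subgroup H} (hK : (φ.comp f).ker ≤ K) :
    ∃ L : Subgroup G, L.FiniteIndex ∧ L.comap f ≤ K :=
  ⟨φ.ker, finiteIndex_ker φ, by rwa [MonoidHom.comap_ker]⟩

theorem exists_perm_comp_eq_of_quasipotent {A : Type u} {G₁ : Type v} {G₂ : Type w} [Group A]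
    [Group G₁] [Group G₂] (hA : IsCyclic A) (f₁ : A →* G₁) (f₂ : A →* G₂)
    (hf₁ : Injective f₁) (hf₂ : Injective f₂) (hq₁ : Quasipotent G₁) (hq₂ : Quasipotent G₂)
    (K₁ : Subgroup G₁) (K₂ : Subgroup G₂) [K₁.FiniteIndex] [K₂.FiniteIndex] :
    ∃ (X : Type max u v w) (_ : Finite X) (ψ₁ : G₁ →* Equiv.Perm X) (ψ₂ : G₂ →* Equiv.Perm X),
      ψ₁.ker ≤ K₁ ∧ ψ₂.ker ≤ K₂ ∧ ψ₁.comp f₁ = ψ₂.comp f₂ := by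
  obtain ⟨a, ha⟩ := hA.exists_generator
  have hord : orderOf (f₁ a) = orderOf (f₂ a) := by
    rw [orderOf_injective f₁ hf₁, orderOf_injective f₂ hf₂]
  obtain ⟨N₁, _, N₂, _, _, _, hN₁, hN₂, hN⟩ := exists_normal_le_orderOf_mk_eq hq₁ hq₂ hord K₁ K₂
  let π₁ := (QuotientGroup.mk' N₁).comp f₁
  let π₂ := (QuotientGroup.mk' N₂).comp f₂
  obtain ⟨X, _, ψ₁, ψ₂, hψ₁, hψ₂, hψ⟩ := exists_perm_injective_comp_eq_of_ker_eq π₁ π₂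
    (MonoidHom.ker_eq_ker_of_orderOf_eq ha π₁ π₂ hN)
  refine ⟨X, ‹_›, ψ₁.comp (QuotientGroup.mk' N₁), ψ₂.comp (QuotientGroup.mk' N₂), ?_, ?_, hψ⟩
  · rwa [MonoidHom.ker_comp_of_injective _ _ hψ₁, QuotientGroup.ker_mk']
  · rwa [MonoidHom.ker_comp_of_injective _ _ hψ₂, QuotientGroup.ker_mk']

/-- If `G₁` and `G₂` are quasipotent groups with a common cyclic subgroup `A`, then
`G₁` and `G₂` are both topologically embedded in `G₁ ∗_A G₂`. -/
theorem statement4 {A G₁ G₂ : Type*} [Group A] [Group G₁] [Group G₂] (hA : IsCyclic A)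
    (f₁ : A →* G₁) (f₂ : A →* G₂)
    (hf₁ : Function.Injective f₁) (hf₂ : Function.Injective f₂)
    (hq₁ : Quasipotent G₁) (hq₂ : Quasipotent G₂) :
    TopologicallyEmbeddedVia (AmalgamatedProduct.inl f₁ f₂) ∧
      TopologicallyEmbeddedVia (AmalgamatedProduct.inr f₁ f₂) := by
  refine ⟨fun K _ => ?_, fun K _ => ?_⟩
  · obtain ⟨X, _, ψ₁, ψ₂, hK, -, hψ⟩ :=
      exists_perm_comp_eq_of_quasipotent hA f₁ f₂ hf₁ hf₂ hq₁ hq₂ K ⊤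
    exact exists_finiteIndex_comap_le_of_ker_le _ (AmalgamatedProduct.lift ψ₁ ψ₂ hψ)
      (by rwa [AmalgamatedProduct.lift_comp_inl])
  · obtain ⟨X, _, ψ₁, ψ₂, -, hK, hψ⟩ :=
      exists_perm_comp_eq_of_quasipotent hA f₁ f₂ hf₁ hf₂ hq₁ hq₂ ⊤ K
    exact exists_finiteIndex_comap_le_of_ker_le _ (AmalgamatedProduct.lift ψ₁ ψ₂ hψ)
      (by rwa [AmalgamatedProduct.lift_comp_inr])
end

section
/- Let G be a finitely generated group and φ : G → G an injective homomorphism. The ascending HNN extension G_φ is residually finite if and only if φ has property 𝔓. -/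
/-- A group `G` is residually finite if every nontrivial element avoids some
finite-index normal subgroup. -/
def ResiduallyFinite (G : Type*) [Group G] : Prop :=
  ∀ g : G, g ≠ 1 → ∃ N : Subgroup G, N.Normal ∧ N.FiniteIndex ∧ g ∉ N

/-- An endomorphism `φ` of `G` has property 𝔓 if for every `g ∈ G` there is a
finite-index normal subgroup `N` such that for all `i ≥ 0`, `φ^i(g) ∈ N ↔ φ^i(g) = 1`. -/
def PropertyP {G : Type*} [Group G] (φ : G →* G) : Prop :=
  ∀ g : G, ∃ N : Subgroup G, N.Normal ∧ N.FiniteIndex ∧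
    ∀ i : ℕ, ((⇑φ)^[i] g ∈ N ↔ (⇑φ)^[i] g = 1)

/-- The ascending HNN extension of `G` with respect to an injective endomorphism `φ`:
the group `⟨G, t | t⁻¹ g t = φ(g) for all g ∈ G⟩`, realized as the HNN extension of `G`
with associated subgroups `φ.range` and `⊤` (so that `t⁻¹ (of g) t = of (φ g)`). -/
noncomputable abbrev AscendingHNNExtension {G : Type*} [Group G] (φ : G →* G)
    (hφ : Function.Injective φ) : Type _ :=
  HNNExtension G φ.range ⊤ ((MonoidHom.ofInjective hφ).symm.trans Subgroup.topEquiv.symm)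

/-!
Every element of `G_φ` can be written `t^a g t^{-b}`. When `a ≠ b` it survives in the cyclic
quotient `t ↦ 1 ∈ ℤ/(a+b+1)`. When `a = b` it is conjugate to `g ≠ 1`, and 𝔓 gives a
finite-index normal `N` missing the whole orbit `φ^i(g)`. As `G` is finitely generated, the maps
`G → G/N, x ↦ φ^i(x) N` take only finitely many values, so they are eventually periodic in `i`;
the intersection `M` of the kernels of the periodic tail has finite index and satisfies
`φ⁻¹(M) = M`. Then `φ` induces a permutation of the finite set `G/M`, and `G_φ` acts on `G/M` with
`g` acting by left multiplication and `t` by the inverse of that permutation, so `g` acts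
nontrivially. Conversely `φ^i(g)` is conjugate to `g` in `G_φ`, so the trace on `G` of a
finite-index normal subgroup of `G_φ` missing `g` misses every `φ^i(g)`.
-/

theorem Subgroup.finiteIndex_comap {G H : Type*} [Group G] [Group H] (f : G →* H)
    (M : Subgroup H) [M.Normal] [M.FiniteIndex] : (M.comap f).FiniteIndex := by
  rw [← QuotientGroup.ker_mk' M, MonoidHom.comap_ker]
  infer_instance

theorem Subgroup.exists_normal_finiteIndex_notMem_of_map_ne_one {H F : Type*} [Group H]
    [Group F] [Finite F] (f : H →* F) {x : H} (hx : f x ≠ 1) :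
    ∃ N : Subgroup H, N.Normal ∧ N.FiniteIndex ∧ x ∉ N :=
  ⟨f.ker, inferInstance, inferInstance, mt f.mem_ker.1 hx⟩

theorem MonoidHom.finite_of_fg {G F : Type*} [Group G] [Group F] (hG : Group.FG G) [Finite F] :
    Finite (G →* F) := by
  obtain ⟨S, hS, hSfin⟩ := Group.fg_iff.1 hG
  have : Finite S := hSfin
  exact Finite.of_injective (fun f : G →* F => fun s : S => f s) fun f f' h =>
    MonoidHom.eq_of_eqOn_dense hS fun x hx => congrFun h ⟨x, hx⟩

theorem QuotientGroup.map_bijective_of_comap_eq_self {G : Type*} [Group G] {φ : G →* G}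
    {M : Subgroup G} [M.Normal] [M.FiniteIndex] (hM : M.comap φ = M) :
    Function.Bijective (QuotientGroup.map M M φ hM.ge) := by
  refine Finite.injective_iff_bijective.1 ((injective_iff_map_eq_one _).2 fun x hx => ?_)
  induction x using QuotientGroup.induction_on with
  | H g =>
    rw [QuotientGroup.map_mk, QuotientGroup.eq_one_iff] at hx
    rwa [QuotientGroup.eq_one_iff, ← hM]

theorem exists_normal_finiteIndex_comap_eq_self {G : Type*} [Group G] (hG : Group.FG G)
    (φ : G →* G) (N : Subgroup G) [N.Normal] [N.FiniteIndex] :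
    ∃ (M : Subgroup G) (p : ℕ), M.Normal ∧ M.FiniteIndex ∧ M.comap φ = M ∧
      ∀ x ∈ M, (⇑φ)^[p] x ∈ N := by
  have := MonoidHom.finite_of_fg (F := G ⧸ N) hG
  let ψ (i : ℕ) : G →* G ⧸ N := (fun f : G →* G ⧸ N => f.comp φ)^[i] (QuotientGroup.mk' N)
  have ψ_apply (i : ℕ) (x : G) : ψ i x = ((⇑φ)^[i] x : G ⧸ N) := by
    induction i generalizing x with
    | zero => rfl
    | succ i ih =>
      simp only [ψ, Function.iterate_succ_apply', MonoidHom.comp_apply] at ih ⊢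
      rw [ih, ← Function.iterate_succ_apply, Function.iterate_succ_apply']
  obtain ⟨p, r, hpr, hψ⟩ : ∃ p r, p < r ∧ ψ p = ψ r := by
    obtain ⟨i, j, hij, hψ⟩ := Finite.exists_ne_map_eq_of_infinite ψ
    rcases lt_or_gt_of_ne hij with h | h
    exacts [⟨i, j, h, hψ⟩, ⟨j, i, h, hψ.symm⟩]
  let M := (MonoidHom.pi fun f : ψ '' Set.Ici p => f.1).ker
  have mem_M (x : G) : x ∈ M ↔ ∀ i ≥ p, ψ i x = 1 := by
    simp only [M, MonoidHom.mem_ker, funext_iff, MonoidHom.pi_apply, Pi.one_apply,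
      Subtype.forall, Set.forall_mem_image, Set.mem_Ici, ge_iff_le]
  refine ⟨M, p, inferInstance, inferInstance, ?_, fun x hx => ?_⟩
  · have shift (i : ℕ) (x : G) : ψ i (φ x) = ψ (i + 1) x := by
      rw [ψ_apply, ψ_apply, Function.iterate_succ_apply]
    have periodic (i : ℕ) (hi : p ≤ i) : ∃ j ≥ p, ψ i = ψ (j + 1) := by
      rcases hi.eq_or_lt with rfl | hi
      · exact ⟨r - 1, by omega, by rw [hψ, Nat.sub_add_cancel (by omega)]⟩
      · exact ⟨i - 1, by omega, by rw [Nat.sub_add_cancel (by omega)]⟩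
    ext x
    simp only [Subgroup.mem_comap, mem_M, shift]
    refine ⟨fun h i hi => ?_, fun h i hi => h (i + 1) (by omega)⟩
    obtain ⟨j, hj, hij⟩ := periodic i hi
    rw [hij, h j hj]
  · simpa [ψ_apply, QuotientGroup.eq_one_iff] using (mem_M x).1 hx p le_rfl

namespace AscendingHNNExtension

open HNNExtension (of t)

variable {G : Type*} [Group G] {φ : G →* G} {hφ : Function.Injective φ}

theorem of_mul_t (g : G) : (of g : AscendingHNNExtension φ hφ) * t = t * of (φ g) := by
  simpa [MonoidHom.ofInjective_apply] using
    HNNExtension.of_mul_t (φ := (MonoidHom.ofInjective hφ).symm.trans Subgroup.topEquiv.symm)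
      ⟨g, Subgroup.mem_top g⟩

theorem of_mul_t_pow (g : G) (k : ℕ) :
    (of g : AscendingHNNExtension φ hφ) * t ^ k = t ^ k * of ((⇑φ)^[k] g) := by
  induction k generalizing g with
  | zero => simp
  | succ k ih =>
    rw [pow_succ, ← mul_assoc, ih, mul_assoc, of_mul_t, ← mul_assoc, ← pow_succ,
      Function.iterate_succ_apply']

theorem inv_t_mul_of (g : G) :
    (t : AscendingHNNExtension φ hφ)⁻¹ * of g = of (φ g) * t⁻¹ := by
  rw [inv_mul_eq_iff_eq_mul, ← mul_assoc, ← of_mul_t, mul_inv_cancel_right]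

section Lift

variable {H : Type*} [Group H] (f : G →* H) (τ : H) (hτ : ∀ g, f g * τ = τ * f (φ g))

variable (φ hφ) in
noncomputable def lift : AscendingHNNExtension φ hφ →* H :=
  HNNExtension.lift f τ <| by
    rintro ⟨_, g, rfl⟩
    have : (MonoidHom.ofInjective hφ).symm ⟨φ g, g, rfl⟩ = g :=
      hφ (MonoidHom.apply_ofInjective_symm hφ _)
    simpa [this] using (hτ g).symm

@[simp]
theorem lift_of (g : G) : lift φ hφ f τ hτ (of g) = f g :=
  HNNExtension.lift_of ..

@[simp]
theorem lift_t : lift φ hφ f τ hτ t = τ :=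
  HNNExtension.lift_t ..

end Lift

theorem exists_eq_t_pow_mul_of_mul_inv (x : AscendingHNNExtension φ hφ) :
    ∃ (a b : ℕ) (g : G), x = t ^ a * of g * (t ^ b)⁻¹ := by
  set S : Set (AscendingHNNExtension φ hφ) :=
    {y | ∃ (a b : ℕ) (g : G), y = t ^ a * of g * (t ^ b)⁻¹}
  have of_mul (h : G) : ∀ y ∈ S, of h * y ∈ S := by
    rintro _ ⟨a, b, g, rfl⟩
    exact ⟨a, b, (⇑φ)^[a] h * g, by rw [map_mul, ← mul_assoc, ← mul_assoc, of_mul_t_pow]; group⟩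
  have t_mul : ∀ y ∈ S, t * y ∈ S := by
    rintro _ ⟨a, b, g, rfl⟩
    exact ⟨a + 1, b, g, by rw [pow_succ']; group⟩
  have inv_t_mul : ∀ y ∈ S, t⁻¹ * y ∈ S := by
    rintro _ ⟨_ | a, b, g, rfl⟩
    · exact ⟨0, b + 1, φ g, by
        rw [pow_zero, one_mul, ← mul_assoc, inv_t_mul_of, pow_succ]; group⟩
    · exact ⟨a, b, g, by rw [pow_succ']; group⟩
  suffices h : ∀ z, (∀ y ∈ S, z * y ∈ S) ∧ (∀ y ∈ S, z⁻¹ * y ∈ S) by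
    simpa [S] using (h x).1 1 ⟨0, 0, 1, by simp⟩
  intro z
  induction z using HNNExtension.induction_on with
  | of h => exact ⟨of_mul h, by simpa using of_mul h⁻¹⟩
  | t => exact ⟨t_mul, inv_t_mul⟩
  | mul x y hx hy =>
    exact ⟨fun w hw => by simpa [mul_assoc] using hx.1 _ (hy.1 w hw),
      fun w hw => by simpa [mul_assoc] using hy.2 _ (hx.2 w hw)⟩
  | inv x hx => exact ⟨hx.2, by simpa using hx.1⟩

theorem propertyP_of_residuallyFinite (h : ResiduallyFinite (AscendingHNNExtension φ hφ)) :
    PropertyP φ := by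
  intro g
  rcases eq_or_ne g 1 with rfl | hg
  · exact ⟨⊤, inferInstance, inferInstance, fun i => by simp⟩
  obtain ⟨M, hMn, hMf, hgM⟩ := h (of g) ((map_ne_one_iff _ (HNNExtension.of_injective _)).2 hg)
  refine ⟨M.comap of, hMn.comap of, Subgroup.finiteIndex_comap of M,
    fun i => ⟨fun hi => absurd ?_ hgM, fun hi => hi ▸ one_mem _⟩⟩
  have := hMn.conj_mem _ hi (t ^ i)
  rwa [← of_mul_t_pow, mul_inv_cancel_right] at this

section InvariantQuotient

variable (M : Subgroup G) [M.Normal] [M.FiniteIndex] (hM : M.comap φ = M)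

variable (hφ) in
noncomputable def permQuotient : AscendingHNNExtension φ hφ →* Equiv.Perm (G ⧸ M) :=
  lift φ hφ ((MulAction.toPermHom (G ⧸ M) (G ⧸ M)).comp (QuotientGroup.mk' M))
    (Equiv.ofBijective _ (QuotientGroup.map_bijective_of_comap_eq_self hM)).symm <| by
    intro g
    ext x
    obtain ⟨y, rfl⟩ :=
      (Equiv.ofBijective _ (QuotientGroup.map_bijective_of_comap_eq_self hM)).surjective x
    simp only [Equiv.Perm.mul_apply, MonoidHom.comp_apply, MulAction.toPermHom_apply,
      MulAction.toPerm_apply, smul_eq_mul, Equiv.ofBijective_apply, QuotientGroup.mk'_apply]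
    rw [← QuotientGroup.map_mk M M φ hM.ge, ← map_mul, Equiv.ofBijective_symm_apply_apply,
      Equiv.ofBijective_symm_apply_apply]

theorem permQuotient_of_apply_one (g : G) : permQuotient hφ M hM (of g) 1 = g := by
  simp [permQuotient]

end InvariantQuotient

variable (φ hφ) in
noncomputable def tExponentMod (m : ℕ) : AscendingHNNExtension φ hφ →* Multiplicative (ZMod m) :=
  lift φ hφ 1 (.ofAdd 1) (by simp)

theorem tExponentMod_apply (m a b : ℕ) (g : G) :
    tExponentMod φ hφ m (t ^ a * of g * (t ^ b)⁻¹) = .ofAdd ((a : ZMod m) - b) := by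
  simp [tExponentMod, ofAdd_sub, ← ofAdd_nsmul, div_eq_mul_inv]

theorem residuallyFinite_of_propertyP (hG : Group.FG G) (hP : PropertyP φ) :
    ResiduallyFinite (AscendingHNNExtension φ hφ) := by
  intro x hx
  obtain ⟨a, b, g, rfl⟩ := exists_eq_t_pow_mul_of_mul_inv x
  rcases eq_or_ne a b with rfl | hab
  · obtain ⟨N, _, _, hN⟩ := hP g
    obtain ⟨M, p, _, _, hM, hMN⟩ := exists_normal_finiteIndex_comap_eq_self hG φ N
    have hgM : (g : G ⧸ M) ≠ 1 := by
      intro h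
      have h1 : (⇑φ)^[p] g = 1 := (hN p).1 (hMN g ((QuotientGroup.eq_one_iff g).1 h))
      refine hx ?_
      rw [(hφ.iterate p) (h1.trans (iterate_map_one φ p).symm), map_one, mul_one, mul_inv_cancel]
    refine Subgroup.exists_normal_finiteIndex_notMem_of_map_ne_one (permQuotient hφ M hM) ?_
    rw [map_mul, map_mul, map_inv, Ne, conj_eq_one_iff]
    refine fun h => hgM ?_
    rw [← permQuotient_of_apply_one (hφ := hφ) M hM, h, Equiv.Perm.one_apply]
  · refine Subgroup.exists_normal_finiteIndex_notMem_of_map_ne_one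
      (tExponentMod φ hφ (a + b + 1)) ?_
    rw [tExponentMod_apply, Ne, ofAdd_eq_one, sub_eq_zero, ZMod.natCast_eq_natCast_iff',
      Nat.mod_eq_of_lt (by omega), Nat.mod_eq_of_lt (by omega)]
    exact hab

end AscendingHNNExtension

/-- For a finitely generated group `G` and a monomorphism `φ : G → G`, the ascending
HNN extension `G_φ` is residually finite iff `φ` has property 𝔓. -/
theorem statement11 {G : Type*} [Group G] (hfg : Group.FG G) (φ : G →* G)
    (hφ : Function.Injective φ) :
    ResiduallyFinite (AscendingHNNExtension φ hφ) ↔ PropertyP φ :=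
  ⟨AscendingHNNExtension.propertyP_of_residuallyFinite,
    AscendingHNNExtension.residuallyFinite_of_propertyP hfg⟩
end
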